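/- arXiv:1701.03099 — 7 statements merged into one kernel-verified Lean document; each statement's English description precedes it below -/
import Mathlib

section
/- For p, q > 1 with 1/p + 1/q = 1, the convex conjugate (Young–Fenchel transform) of φ_p equals φ_q, i.e. sup_{x∈ℝ} (xy − φ_p(x)) = φ_q(y) for every y ∈ ℝ. -/
open MeasureTheory Real Filter

noncomputable def phi (p x : ℝ) : ℝ :=
  if |x| ≤ 1 then x ^ 2 / 2 else |x| ^ p / p - 1 / p + 1 / 2

/-! Both inequality and attainment reduce to `x, y ≥ 0`, where `phi` is `x²/2` on `[0, 1]` and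
`xᵖ/p` shifted by the constant `1/2 - 1/p` beyond. On `|x|, |y| > 1` the claim is Young's
inequality `xy ≤ xᵖ/p + y^q/q` with its equality case `x = y^(q-1)`, the constants cancelling
because `1/p + 1/q = 1`; the mixed regions are covered by Young's inequality with one factor `1`. -/

lemma phi_of_abs_le {p x : ℝ} (hx : |x| ≤ 1) : phi p x = x ^ 2 / 2 := if_pos hx

lemma phi_of_one_lt_abs {p x : ℝ} (hx : 1 < |x|) : phi p x = |x| ^ p / p - 1 / p + 1 / 2 :=
  if_neg hx.not_ge

lemma phi_abs (p x : ℝ) : phi p |x| = phi p x := by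
  simp only [phi, abs_abs, sq_abs]

lemma phi_neg (p x : ℝ) : phi p (-x) = phi p x := by
  rw [← phi_abs, abs_neg, phi_abs]

section HolderConjugate

variable {p q : ℝ} (hpq : p.HolderConjugate q)
include hpq

lemma mul_le_phi_add_phi_of_le_one_of_one_lt {x y : ℝ} (hx₀ : 0 ≤ x) (hx₁ : x ≤ 1) (hy : 1 < y) :
    x * y ≤ phi p x + phi q y := by
  have hy₀ : 0 ≤ y := by linarith
  rw [phi_of_abs_le (by rwa [abs_of_nonneg hx₀]), phi_of_one_lt_abs (by rwa [abs_of_nonneg hy₀]),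
    abs_of_nonneg hy₀]
  have young : 1 * y ≤ 1 ^ p / p + y ^ q / q :=
    young_inequality_of_nonneg zero_le_one hy₀ hpq
  rw [one_rpow, one_mul] at young
  have := hpq.one_div_add_one_div
  -- `x y - x²/2 ≤ y - 1/2` on `[0, 1]`, since the difference is `(1-x)(y-1) + (1-x)²/2`
  nlinarith [mul_nonneg (sub_nonneg.2 hx₁) (sub_nonneg.2 hy.le), sq_nonneg (1 - x)]

lemma mul_le_phi_add_phi_of_nonneg {x y : ℝ} (hx : 0 ≤ x) (hy : 0 ≤ y) :
    x * y ≤ phi p x + phi q y := by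
  rcases le_or_gt x 1 with hx₁ | hx₁ <;> rcases le_or_gt y 1 with hy₁ | hy₁
  · rw [phi_of_abs_le (by rwa [abs_of_nonneg hx]), phi_of_abs_le (by rwa [abs_of_nonneg hy])]
    nlinarith [sq_nonneg (x - y)]
  · exact mul_le_phi_add_phi_of_le_one_of_one_lt hpq hx hx₁ hy₁
  · rw [mul_comm, add_comm]
    exact mul_le_phi_add_phi_of_le_one_of_one_lt hpq.symm hy hy₁ hx₁
  · rw [phi_of_one_lt_abs (by rwa [abs_of_nonneg hx]), phi_of_one_lt_abs (by rwa [abs_of_nonneg hy]),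
      abs_of_nonneg hx, abs_of_nonneg hy]
    have := hpq.one_div_add_one_div
    linarith [young_inequality_of_nonneg hx hy hpq]

lemma mul_le_phi_add_phi (x y : ℝ) : x * y ≤ phi p x + phi q y :=
  calc x * y ≤ |x| * |y| := (le_abs_self _).trans (abs_mul x y).le
    _ ≤ phi p |x| + phi q |y| := mul_le_phi_add_phi_of_nonneg hpq (abs_nonneg x) (abs_nonneg y)
    _ = phi p x + phi q y := by rw [phi_abs, phi_abs]

lemma exists_mul_eq_phi_add_phi_of_nonneg {y : ℝ} (hy : 0 ≤ y) :
    ∃ x, x * y = phi p x + phi q y := by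
  rcases le_or_gt y 1 with hy₁ | hy₁
  · refine ⟨y, ?_⟩
    rw [phi_of_abs_le (by rwa [abs_of_nonneg hy]), phi_of_abs_le (by rwa [abs_of_nonneg hy])]
    ring
  · have hy₀ : 0 < y := by linarith
    have hx₁ : 1 < y ^ (q - 1) := one_lt_rpow hy₁ hpq.symm.sub_one_pos
    have hxy : y ^ (q - 1) * y = y ^ q := by
      rw [← rpow_add_one hy₀.ne', sub_add_cancel]
    have hxp : (y ^ (q - 1)) ^ p = y ^ q := by
      rw [← rpow_mul hy, hpq.symm.sub_one_mul_conj]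
    refine ⟨y ^ (q - 1), ?_⟩
    rw [phi_of_one_lt_abs (by rwa [abs_of_pos (by linarith)]),
      phi_of_one_lt_abs (by rwa [abs_of_nonneg hy]), abs_of_pos (by linarith), abs_of_nonneg hy,
      hxy, hxp]
    linear_combination (1 - y ^ q) * hpq.one_div_add_one_div

lemma exists_mul_eq_phi_add_phi (y : ℝ) : ∃ x, x * y = phi p x + phi q y := by
  rcases le_total 0 y with hy | hy
  · exact exists_mul_eq_phi_add_phi_of_nonneg hpq hy
  · obtain ⟨x, hx⟩ := exists_mul_eq_phi_add_phi_of_nonneg hpq (neg_nonneg.2 hy)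
    exact ⟨-x, by rw [phi_neg, ← phi_neg q y, ← hx]; ring⟩

end HolderConjugate

theorem stmt_2_general (p q : ℝ) (hp : 1 < p) (hpq : 1 / p + 1 / q = 1) (y : ℝ) :
    (⨆ x : ℝ, x * y - phi p x) = phi q y := by
  have hpq' : p.HolderConjugate q := holderConjugate_iff.2 ⟨hp, by simpa only [one_div] using hpq⟩
  obtain ⟨x₀, hx₀⟩ := exists_mul_eq_phi_add_phi hpq' y
  refine le_antisymm (ciSup_le fun x => ?_) (le_ciSup_of_le ⟨phi q y, ?_⟩ x₀ ?_)
  · linarith [mul_le_phi_add_phi hpq' x y]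
  · rintro _ ⟨x, rfl⟩
    linarith [mul_le_phi_add_phi hpq' x y]
  · linarith

theorem stmt_2 (p q : ℝ) (hp : 1 < p) (hq : 1 < q) (hpq : 1 / p + 1 / q = 1) (y : ℝ) :
    (⨆ x : ℝ, x * y - phi p x) = phi q y :=
  stmt_2_general p q hp hpq y
end

section
/- Let φ be an N-function with φ(x) = x²/2 for |x| ≤ 1. If ξ is a bounded random variable with E[ξ] = 0, then ξ is φ-subgaussian, i.e. there exists b ≥ 0 such that log E[exp(λξ)] ≤ φ(bλ) for all λ ∈ ℝ. -/
/-!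
Hoeffding's lemma bounds the cumulant generating function of a centred variable with `|ξ| ≤ N`
by `N² λ² / 2`, and trivially `E[exp (λ ξ)] ≤ exp (N |λ|)`. On the other side, `φ` is quadratic
on `[-1, 1]` and, being convex with `φ 0 = 0` and `φ (±1) = 1/2`, grows at least like `|x| / 2`
outside it. With `b = 2N` the quadratic bound wins where `|b λ| ≤ 1` and the linear one elsewhere.
-/

open MeasureTheory ProbabilityTheory Real Filter Set

lemma ConvexOn.map_smul_le_of_map_zero_nonpos {E : Type*} [AddCommGroup E] [Module ℝ E]
    {s : Set E} {f : E → ℝ} (hf : ConvexOn ℝ s f) (h0s : (0 : E) ∈ s) (h0 : f 0 ≤ 0)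
    {x : E} (hx : x ∈ s) {a : ℝ} (ha₀ : 0 ≤ a) (ha₁ : a ≤ 1) : f (a • x) ≤ a * f x := by
  have h := hf.2 h0s hx (sub_nonneg.2 ha₁) ha₀ (sub_add_cancel 1 a)
  simp only [smul_zero, zero_add, smul_eq_mul] at h
  nlinarith

lemma min_sq_div_two_abs_div_two_le {φ : ℝ → ℝ} (hconv : ConvexOn ℝ univ φ) (h0 : φ 0 = 0)
    (hquad : ∀ x : ℝ, |x| ≤ 1 → φ x = x ^ 2 / 2) (x : ℝ) :
    min (x ^ 2 / 2) (|x| / 2) ≤ φ x := by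
  rcases le_total |x| 1 with hx | hx
  · exact (min_le_left _ _).trans (hquad x hx).ge
  refine (min_le_right _ _).trans ?_
  have hx₀ : 0 < |x| := by linarith
  have hunit : φ (|x|⁻¹ • x) = 1 / 2 := by
    rw [hquad _ (by simp [abs_mul, hx₀.ne']), smul_eq_mul, mul_pow, ← sq_abs x]
    field_simp
  have h := hconv.map_smul_le_of_map_zero_nonpos (mem_univ 0) h0.le (mem_univ x)
    (inv_nonneg.2 hx₀.le) (inv_le_one_of_one_le₀ hx)
  rw [hunit, ← div_eq_inv_mul, le_div_iff₀ hx₀] at h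
  linarith

section Bounded

variable {Ω : Type*} [MeasurableSpace Ω] {μ : Measure Ω} [IsProbabilityMeasure μ]
  {X : Ω → ℝ} {N : ℝ}

lemma mgf_le_exp_abs_mul_of_abs_le (hX : ∀ᵐ ω ∂μ, |X ω| ≤ N) (t : ℝ) :
    mgf X μ t ≤ exp (|t| * N) := by
  have hpoint : ∀ᵐ ω ∂μ, exp (t * X ω) ≤ exp (|t| * N) := hX.mono fun ω h ↦ exp_le_exp.2 <|
    calc t * X ω ≤ |t| * |X ω| := by rw [← abs_mul]; exact le_abs_self _
      _ ≤ |t| * N := by gcongr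
  calc mgf X μ t ≤ ∫ _, exp (|t| * N) ∂μ :=
        integral_mono_of_nonneg (ae_of_all _ fun _ ↦ (exp_pos _).le) (integrable_const _) hpoint
    _ = exp (|t| * N) := by simp

lemma cgf_le_min_of_abs_le (hm : AEMeasurable X μ) (hX : ∀ᵐ ω ∂μ, |X ω| ≤ N)
    (hmean : μ[X] = 0) (t : ℝ) : cgf X μ t ≤ min (N ^ 2 * t ^ 2 / 2) (|t| * N) := by
  have hsub := hasSubgaussianMGF_of_mem_Icc_of_integral_eq_zero hm
    (hX.mono fun _ h ↦ abs_le.1 h) hmean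
  refine le_min ?_ ?_
  · refine (hsub.cgf_le t).trans_eq ?_
    push_cast
    rw [norm_eq_abs, div_pow, sq_abs]
    ring
  · exact (log_le_log (mgf_pos (hsub.integrable_exp_mul t))
      (mgf_le_exp_abs_mul_of_abs_le hX t)).trans (log_exp _).le

end Bounded

theorem stmt_5_general {Ω : Type*} [MeasurableSpace Ω] (μ : Measure Ω) [IsProbabilityMeasure μ]
    (φ : ℝ → ℝ)
    (hconv : ConvexOn ℝ Set.univ φ)
    (h0 : φ 0 = 0)
    (hquad : ∀ x : ℝ, |x| ≤ 1 → φ x = x ^ 2 / 2)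
    (ξ : Ω → ℝ) (hmeas : AEMeasurable ξ μ)
    (hbdd : ∃ M : ℝ, ∀ᵐ ω ∂μ, |ξ ω| ≤ M)
    (hmean : ∫ ω, ξ ω ∂μ = 0) :
    ∃ b : ℝ, 0 ≤ b ∧ ∀ l : ℝ, Real.log (∫ ω, Real.exp (l * ξ ω) ∂μ) ≤ φ (b * l) := by
  obtain ⟨M, hM⟩ := hbdd
  set N := |M|
  have hN : ∀ᵐ ω ∂μ, |ξ ω| ≤ N := hM.mono fun _ h ↦ h.trans (le_abs_self M)
  refine ⟨2 * N, by positivity, fun l ↦ ?_⟩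
  calc log (∫ ω, exp (l * ξ ω) ∂μ) = cgf ξ μ l := rfl
    _ ≤ min (N ^ 2 * l ^ 2 / 2) (|l| * N) := cgf_le_min_of_abs_le hmeas hN hmean l
    _ ≤ min ((2 * N * l) ^ 2 / 2) (|2 * N * l| / 2) := by
        refine min_le_min (by nlinarith [sq_nonneg (N * l)]) (le_of_eq ?_)
        rw [abs_mul, abs_mul, abs_two, abs_abs]
        ring
    _ ≤ φ (2 * N * l) := min_sq_div_two_abs_div_two_le hconv h0 hquad _

theorem stmt_5 {Ω : Type*} [MeasurableSpace Ω] (μ : Measure Ω) [IsProbabilityMeasure μ]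
    (φ : ℝ → ℝ)
    (heven : ∀ x, φ (-x) = φ x) (hcont : Continuous φ) (hconv : ConvexOn ℝ Set.univ φ)
    (h0 : φ 0 = 0) (hmono : StrictMonoOn φ (Set.Ici 0))
    (hlim0 : Tendsto (fun x : ℝ => φ x / x) (nhdsWithin 0 {0}ᶜ) (nhds 0))
    (hlimtop : Tendsto (fun x : ℝ => φ x / x) atTop atTop)
    (hquad : ∀ x : ℝ, |x| ≤ 1 → φ x = x ^ 2 / 2)
    (ξ : Ω → ℝ) (hmeas : AEMeasurable ξ μ)
    (hbdd : ∃ M : ℝ, ∀ᵐ ω ∂μ, |ξ ω| ≤ M)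
    (hmean : ∫ ω, ξ ω ∂μ = 0) :
    ∃ b : ℝ, 0 ≤ b ∧ ∀ l : ℝ, Real.log (∫ ω, Real.exp (l * ξ ω) ∂μ) ≤ φ (b * l) :=
  stmt_5_general μ φ hconv h0 hquad ξ hmeas hbdd hmean
end

section
/- Let ξ be standard normal and q > 1. Then η = |ξ|^{2/q} − E[|ξ|^{2/q}] belongs to Sub_{φ_p}(Ω), where 1/p + 1/q = 1. -/
/-!
By Young's inequality, `a |x| ^ (2 / q) ≤ C |a| ^ p + x ^ 2 / 4`, and `exp (x ^ 2 / 4)` is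
integrable against the standard Gaussian; hence the cumulant generating function of `η` is
`O(|λ| ^ p)` for `|λ| > 1`. For `|λ| ≤ 1`, `η` is centred with exponential moments of every order,
and `exp x ≤ 1 + x + x ^ 2 exp |x|` bounds its cumulant generating function by `C λ ^ 2`.
A function that is quadratic on `[-1, 1]` and `O(|λ| ^ p)` outside it is dominated by `φ_p (c λ)`
for large `c`.
-/

open MeasureTheory Real Filter

open ProbabilityTheory

lemma rpow_abs_div_le_phi {p x : ℝ} (hp : 1 < p) (hx : 1 < |x|) :
    |x| ^ p / (2 * p) ≤ phi p x := by
  have hp0 : 0 < p := by linarith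
  have h1 : 1 ≤ |x| ^ p := one_le_rpow hx.le hp0.le
  rw [phi, if_neg hx.not_ge, div_le_iff₀ (by positivity)]
  field_simp
  nlinarith

lemma exists_le_phi_of_le_sq_of_le_rpow {f : ℝ → ℝ} {p C D : ℝ} (hp : 1 < p) (hC : 0 ≤ C)
    (hD : 0 ≤ D) (hsmall : ∀ t, |t| ≤ 1 → f t ≤ C * t ^ 2)
    (hlarge : ∀ t, 1 < |t| → f t ≤ D * |t| ^ p) :
    ∃ c, 0 ≤ c ∧ ∀ t, f t ≤ phi p (c * t) := by
  have hp0 : 0 < p := by linarith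
  set c := 1 + 2 * p * (C + D)
  have hc1 : 1 ≤ c := by have := mul_nonneg hp0.le (add_nonneg hC hD); linarith
  have hcC : 2 * p * C ≤ c := by nlinarith
  have hcD : 2 * p * D ≤ c := by nlinarith
  refine ⟨c, by linarith, fun t ↦ ?_⟩
  have habs : |c * t| = c * |t| := by rw [abs_mul, abs_of_pos (by linarith)]
  rcases le_or_gt |c * t| 1 with hct | hct
  · have ht : |t| ≤ 1 := by nlinarith [abs_nonneg t]
    have : 2 * C ≤ c ^ 2 := by nlinarith
    rw [phi, if_pos hct]
    nlinarith [hsmall t ht, sq_nonneg t]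
  refine le_trans ?_ (rpow_abs_div_le_phi hp hct)
  rw [le_div_iff₀ (by positivity)]
  rcases le_or_gt |t| 1 with ht | ht
  · have h1 : |c * t| ≤ |c * t| ^ p := self_le_rpow_of_one_le hct.le hp.le
    have h2 : t ^ 2 ≤ |t| := by rw [← sq_abs]; nlinarith [abs_nonneg t]
    nlinarith [hsmall t ht]
  · have hcp : c ≤ c ^ p := self_le_rpow_of_one_le hc1 hp.le
    have : 0 ≤ |t| ^ p := by positivity
    rw [habs, mul_rpow (by linarith) (abs_nonneg t)]
    nlinarith [hlarge t ht]

lemma exp_le_one_add_add_sq_mul_exp_abs (x : ℝ) : rexp x ≤ 1 + x + x ^ 2 * rexp |x| := by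
  have h1 : x ^ 2 ≤ x ^ 2 * rexp |x| :=
    le_mul_of_one_le_right (sq_nonneg x) (one_le_exp (abs_nonneg x))
  rcases le_or_gt |x| 1 with hx | hx
  · linarith [abs_le.mp (abs_exp_sub_one_sub_id_le hx)]
  rcases lt_abs.mp hx with hx | hx
  · have : 1 ≤ x ^ 2 := by nlinarith
    rw [abs_of_pos (by linarith)] at h1 ⊢
    nlinarith [exp_pos x]
  · have : rexp x ≤ 1 := exp_le_one_iff.mpr (by linarith)
    nlinarith

section CenteredCgf

variable {Ω : Type*} {mΩ : MeasurableSpace Ω} {μ : Measure Ω} {X : Ω → ℝ}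

lemma integrable_sq_mul_exp_abs (hX : ∀ t, Integrable (fun ω ↦ rexp (t * X ω)) μ) :
    Integrable (fun ω ↦ X ω ^ 2 * rexp |X ω|) μ := by
  simpa using integrable_pow_abs_mul_exp_add_of_integrable_exp_mul (v := 0) (t := 2) (x := 1)
    (by simpa using hX 2) (by simpa using hX (-2)) zero_le_one (by norm_num) 2

lemma integrable_of_forall_integrable_exp_mul
    (hX : ∀ t, Integrable (fun ω ↦ rexp (t * X ω)) μ) : Integrable X μ :=
  integrable_of_mem_interior_integrableExpSet (by simp [integrableExpSet, hX])

variable [IsProbabilityMeasure μ]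

lemma cgf_le_sq_mul_of_abs_le_one (hX : ∀ t, Integrable (fun ω ↦ rexp (t * X ω)) μ)
    (hX0 : μ[X] = 0) {t : ℝ} (ht : |t| ≤ 1) :
    cgf X μ t ≤ μ[fun ω ↦ X ω ^ 2 * rexp |X ω|] * t ^ 2 := by
  have hXint := integrable_of_forall_integrable_exp_mul hX
  have hQ := integrable_sq_mul_exp_abs hX
  have hlin : Integrable (fun ω ↦ 1 + t * X ω) μ := (integrable_const 1).add (hXint.const_mul t)
  have hpointwise : ∀ ω, rexp (t * X ω) ≤ 1 + t * X ω + t ^ 2 * (X ω ^ 2 * rexp |X ω|) := by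
    intro ω
    have : rexp |t * X ω| ≤ rexp |X ω| := by
      rw [exp_le_exp, abs_mul]; exact mul_le_of_le_one_left (abs_nonneg _) ht
    calc rexp (t * X ω) ≤ 1 + t * X ω + (t * X ω) ^ 2 * rexp |t * X ω| :=
          exp_le_one_add_add_sq_mul_exp_abs _
      _ ≤ _ := by rw [mul_pow, mul_assoc]; gcongr
  have hmgf : mgf X μ t ≤ 1 + t ^ 2 * μ[fun ω ↦ X ω ^ 2 * rexp |X ω|] := by
    calc mgf X μ t ≤ ∫ ω, (1 + t * X ω + t ^ 2 * (X ω ^ 2 * rexp |X ω|)) ∂μ :=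
          integral_mono (hX t) (hlin.add (hQ.const_mul _)) hpointwise
      _ = _ := by
          rw [integral_add hlin (hQ.const_mul _),
            integral_add (integrable_const 1) (hXint.const_mul t), integral_const_mul,
            integral_const_mul, hX0]
          simp
  calc cgf X μ t ≤ mgf X μ t - 1 := log_le_sub_one_of_pos (mgf_pos (hX t))
    _ ≤ _ := by linarith

omit [IsProbabilityMeasure μ] in
lemma integrable_exp_mul_sub_const {t : ℝ} (hX : Integrable (fun ω ↦ rexp (t * X ω)) μ) (m : ℝ) :
    Integrable (fun ω ↦ rexp (t * (X ω - m))) μ := by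
  convert hX.mul_const (rexp (-(t * m))) using 2 with ω
  rw [← exp_add]
  ring_nf

lemma cgf_sub_const {t : ℝ} (hX : Integrable (fun ω ↦ rexp (t * X ω)) μ) (m : ℝ) :
    cgf (fun ω ↦ X ω - m) μ t = cgf X μ t - t * m := by
  simp_rw [cgf, sub_eq_add_neg, mgf_add_const, log_mul (mgf_pos hX).ne' (exp_pos _).ne',
    log_exp, mul_neg]

lemma cgf_sub_const_le_mul_rpow {p A B t : ℝ} (hp : 1 ≤ p) (ht : 1 ≤ |t|)
    (hX : Integrable (fun ω ↦ rexp (t * X ω)) μ) (hcgf : cgf X μ t ≤ B + A * |t| ^ p) (m : ℝ) :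
    cgf (fun ω ↦ X ω - m) μ t ≤ (|m| + |B| + A) * |t| ^ p := by
  have h1 : 1 ≤ |t| ^ p := one_le_rpow ht (by linarith)
  have h2 : |t| ≤ |t| ^ p := self_le_rpow_of_one_le ht hp
  have h3 : -(t * m) ≤ |m| * |t| ^ p := by
    calc -(t * m) ≤ |t| * |m| := by rw [← abs_mul]; exact neg_le_abs _
      _ ≤ |t| ^ p * |m| := by gcongr
      _ = _ := mul_comm _ _
  rw [cgf_sub_const hX]
  nlinarith [le_abs_self B, abs_nonneg B]

end CenteredCgf

section GaussianPower

lemma integral_exp_mul_sq_gaussianReal {a : ℝ} (ha : a < 1 / 2) :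
    ∫ x, rexp (a * x ^ 2) ∂gaussianReal 0 1 = (√(1 - 2 * a))⁻¹ := by
  have hb : 0 < 1 / 2 - a := by linarith
  have hdensity : ∀ x, gaussianPDFReal 0 1 x • rexp (a * x ^ 2)
      = (√(2 * π))⁻¹ * rexp (-(1 / 2 - a) * x ^ 2) := by
    intro x
    simp only [gaussianPDFReal, NNReal.coe_one, mul_one, sub_zero, smul_eq_mul, mul_assoc,
      ← exp_add]
    ring_nf
  simp_rw [integral_gaussianReal_eq_integral_smul one_ne_zero, hdensity, integral_const_mul,
    integral_gaussian]
  rw [← sqrt_inv, ← sqrt_mul (by positivity), ← sqrt_inv]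
  congr 1
  field_simp

lemma integrable_exp_mul_sq_gaussianReal {a : ℝ} (ha : a < 1 / 2) :
    Integrable (fun x ↦ rexp (a * x ^ 2)) (gaussianReal 0 1) := by
  refine .of_integral_ne_zero ?_
  have : 0 < 1 - 2 * a := by linarith
  rw [integral_exp_mul_sq_gaussianReal ha]
  positivity

variable {p q : ℝ}

lemma mul_rpow_two_div_le (hpq : p.HolderConjugate q) (a x : ℝ) {δ : ℝ} (hδ : 0 < δ) :
    a * |x| ^ (2 / q) ≤ |a| ^ p / (p * (q * δ) ^ (p / q)) + δ * x ^ 2 := by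
  have hq := hpq.symm.pos
  set ε := (q * δ) ^ (1 / q)
  have hε : 0 < ε := by positivity
  have hu : (|a| / ε) ^ p = |a| ^ p / (q * δ) ^ (p / q) := by
    rw [div_rpow (abs_nonneg a) hε.le, ← rpow_mul (by positivity), one_div_mul_eq_div]
  have hv : (ε * |x| ^ (2 / q)) ^ q = q * δ * x ^ 2 := by
    rw [mul_rpow hε.le (by positivity), ← rpow_mul (by positivity), ← rpow_mul (abs_nonneg x),
      one_div_mul_cancel hq.ne', div_mul_cancel₀ _ hq.ne', rpow_one, rpow_two, sq_abs]
  have young := young_inequality_of_nonneg (div_nonneg (abs_nonneg a) hε.le)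
    (mul_nonneg hε.le (rpow_nonneg (abs_nonneg x) (2 / q))) hpq
  rw [hu, hv] at young
  calc a * |x| ^ (2 / q) ≤ |a| * |x| ^ (2 / q) := by gcongr; exact le_abs_self a
    _ = |a| / ε * (ε * |x| ^ (2 / q)) := by field_simp
    _ ≤ _ := young
    _ = _ := by field_simp

lemma integrable_exp_mul_rpow_abs_gaussianReal (hpq : p.HolderConjugate q) (t : ℝ) :
    Integrable (fun x ↦ rexp (t * |x| ^ (2 / q))) (gaussianReal 0 1) := by
  refine ((integrable_exp_mul_sq_gaussianReal (a := 1 / 4) (by norm_num)).const_mul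
    (rexp (|t| ^ p / (p * (q * (1 / 4)) ^ (p / q))))).mono'
    (Measurable.aestronglyMeasurable (by fun_prop)) (ae_of_all _ fun x ↦ ?_)
  rw [norm_of_nonneg (exp_pos _).le, ← exp_add, exp_le_exp]
  exact mul_rpow_two_div_le hpq t x (by norm_num)

lemma cgf_rpow_abs_gaussianReal_le (hpq : p.HolderConjugate q) {δ : ℝ} (hδ : 0 < δ)
    (hδ' : δ < 1 / 2) (t : ℝ) :
    cgf (fun x ↦ |x| ^ (2 / q)) (gaussianReal 0 1) t
      ≤ log (√(1 - 2 * δ))⁻¹ + (p * (q * δ) ^ (p / q))⁻¹ * |t| ^ p := by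
  have hint := integrable_exp_mul_rpow_abs_gaussianReal hpq t
  have hmgf : mgf (fun x ↦ |x| ^ (2 / q)) (gaussianReal 0 1) t
      ≤ (√(1 - 2 * δ))⁻¹ * rexp ((p * (q * δ) ^ (p / q))⁻¹ * |t| ^ p) := by
    calc mgf (fun x ↦ |x| ^ (2 / q)) (gaussianReal 0 1) t
        ≤ ∫ x, rexp ((p * (q * δ) ^ (p / q))⁻¹ * |t| ^ p) * rexp (δ * x ^ 2) ∂gaussianReal 0 1 :=
          integral_mono hint ((integrable_exp_mul_sq_gaussianReal hδ').const_mul _) fun x ↦ by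
            rw [← exp_add, exp_le_exp, inv_mul_eq_div]
            exact mul_rpow_two_div_le hpq t x hδ
      _ = _ := by rw [integral_const_mul, integral_exp_mul_sq_gaussianReal hδ', mul_comm]
  have : 0 < 1 - 2 * δ := by linarith
  calc cgf (fun x ↦ |x| ^ (2 / q)) (gaussianReal 0 1) t
      ≤ log ((√(1 - 2 * δ))⁻¹ * rexp ((p * (q * δ) ^ (p / q))⁻¹ * |t| ^ p)) :=
        log_le_log (mgf_pos hint) hmgf
    _ = _ := by rw [log_mul (by positivity) (exp_pos _).ne', log_exp]

end GaussianPower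

theorem stmt_8 {Ω : Type*} [MeasurableSpace Ω] (μ : Measure Ω) [IsProbabilityMeasure μ]
    (p q : ℝ) (hq : 1 < q) (hpq : 1 / p + 1 / q = 1)
    (ξ : Ω → ℝ) (hmeas : Measurable ξ)
    (hlaw : Measure.map ξ μ = ProbabilityTheory.gaussianReal 0 1)
    (η : Ω → ℝ)
    (hη : η = fun ω => |ξ ω| ^ (2 / q) - ∫ ω', |ξ ω'| ^ (2 / q) ∂μ) :
    ∃ c : ℝ, 0 ≤ c ∧ ∀ l : ℝ, Real.log (∫ ω, Real.exp (l * η ω) ∂μ) ≤ phi p (c * l) := by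
  have hconj : p.HolderConjugate q :=
    (holderConjugate_iff.mpr ⟨hq, by simpa only [one_div, add_comm] using hpq⟩).symm
  subst hη
  set Y : Ω → ℝ := fun ω ↦ |ξ ω| ^ (2 / q)
  set m := ∫ ω, Y ω ∂μ
  have hYint : ∀ t, Integrable (fun ω ↦ rexp (t * Y ω)) μ := fun t ↦
    (integrable_map_measure (g := fun x ↦ rexp (t * |x| ^ (2 / q)))
      (Measurable.aestronglyMeasurable (by fun_prop)) hmeas.aemeasurable).mp
      (hlaw ▸ integrable_exp_mul_rpow_abs_gaussianReal hconj t)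
  have hYcgf : ∀ t, cgf Y μ t = cgf (fun x ↦ |x| ^ (2 / q)) (gaussianReal 0 1) t := fun t ↦ by
    rw [← hlaw, cgf, cgf,
      mgf_map hmeas.aemeasurable (Measurable.aestronglyMeasurable (by fun_prop))]
    rfl
  have hηint : ∀ t, Integrable (fun ω ↦ rexp (t * (Y ω - m))) μ := fun t ↦
    integrable_exp_mul_sub_const (hYint t) m
  have hη0 : ∫ ω, (Y ω - m) ∂μ = 0 := by
    rw [integral_sub (integrable_of_forall_integrable_exp_mul hYint) (integrable_const _)]
    simp [m]
  change ∃ c, 0 ≤ c ∧ ∀ l, cgf (fun ω ↦ Y ω - m) μ l ≤ phi p (c * l)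
  have hsmall : ∀ t, |t| ≤ 1 → cgf (fun ω ↦ Y ω - m) μ t
      ≤ μ[fun ω ↦ (Y ω - m) ^ 2 * rexp |Y ω - m|] * t ^ 2 :=
    fun t ht ↦ cgf_le_sq_mul_of_abs_le_one hηint hη0 ht
  have hlarge := fun t (ht : 1 < |t|) ↦ cgf_sub_const_le_mul_rpow hconj.lt.le ht.le (hYint t)
    ((hYcgf t).trans_le (cgf_rpow_abs_gaussianReal_le hconj (δ := 1 / 4) (by norm_num)
      (by norm_num) t)) m
  have hp := hconj.pos
  exact exists_le_phi_of_le_sq_of_le_rpow hconj.lt (integral_nonneg fun ω ↦ by positivity)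
    (by positivity) hsmall hlarge
end

section
/- Let ξ be a random variable with E[ξ] = 0 and ℙ(ξ ∈ [a,b]) = 1, c = (b−a)/2, d = max{−a,b}, p > 1, r = min{p,2}, and γ_r = (c²/(2d)) { r [ 2(d/c)² + 1/r − 1/2 ] }^{1/r}. Then τ_{φ_p}(ξ) ≤ γ_r, i.e. log E[exp(λξ)] ≤ φ_p(γ_r λ) for all λ ∈ ℝ. -/
open MeasureTheory Real Filter

noncomputable def gam (r c d : ℝ) : ℝ :=
  c ^ 2 / (2 * d) * (r * (2 * (d / c) ^ 2 + 1 / r - 1 / 2)) ^ (1 / r)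

lemma hoeff_aux {p : ℝ} (hp0 : 0 ≤ p) (hp1 : p ≤ 1) (h : ℝ) :
    Real.log ((1 - p) + p * Real.exp h) ≤ p * h + h ^ 2 / 8 := by
  rcases eq_or_lt_of_le hp0 with rfl | hp
  · simp; positivity
  rcases eq_or_lt_of_le hp1 with rfl | hp1'
  · simp [Real.log_exp]; nlinarith [sq_nonneg h]
  set q : ℝ := 1 - p with hq
  clear_value q
  have hq0 : 0 < q := by simp [hq]; linarith
  have pos : ∀ x : ℝ, 0 < q + p * Real.exp x := fun x =>
    add_pos hq0 (mul_pos hp (Real.exp_pos x))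
  set g : ℝ → ℝ := fun x => p * x + x ^ 2 / 8 - Real.log (q + p * Real.exp x) with hgdef
  set g' : ℝ → ℝ := fun x => p + x / 4 - p * Real.exp x / (q + p * Real.exp x) with hg'def
  have hg' : ∀ x, HasDerivAt g (g' x) x := by
    intro x
    have h1 : HasDerivAt (fun y : ℝ => q + p * Real.exp y) (p * Real.exp x) x :=
      ((Real.hasDerivAt_exp x).const_mul p).const_add q
    have h2 : HasDerivAt (fun y : ℝ => Real.log (q + p * Real.exp y))
        (p * Real.exp x / (q + p * Real.exp x)) x := h1.log (pos x).ne'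
    have h4 : HasDerivAt (fun y : ℝ => p * y) (p * 1) x := (hasDerivAt_id x).const_mul p
    have h3 := h4.add ((hasDerivAt_pow 2 x).div_const 8)
    have := h3.sub h2
    refine this.congr_deriv ?_
    push_cast
    simp only [hg'def]
    ring
  have hg'' : ∀ x, HasDerivAt g' (1 / 4 - p * q * Real.exp x / (q + p * Real.exp x) ^ 2) x := by
    intro x
    have h1 : HasDerivAt (fun y : ℝ => q + p * Real.exp y) (p * Real.exp x) x :=
      ((Real.hasDerivAt_exp x).const_mul p).const_add q
    have h2 : HasDerivAt (fun y : ℝ => p * Real.exp y) (p * Real.exp x) x :=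
      (Real.hasDerivAt_exp x).const_mul p
    have h3 := h2.div h1 (pos x).ne'
    have h4 : HasDerivAt (fun y : ℝ => p + y / 4) (1 / 4) x := by
      simpa using ((hasDerivAt_id x).div_const 4).const_add p
    have := h4.sub h3
    refine this.congr_deriv ?_
    have := (pos x).ne'
    field_simp
    ring
  have hg''nonneg : ∀ x, 0 ≤ 1 / 4 - p * q * Real.exp x / (q + p * Real.exp x) ^ 2 := by
    intro x
    rw [sub_nonneg, div_le_iff₀ (by positivity)]
    have hid : (q + p * Real.exp x) ^ 2 - 4 * (p * q * Real.exp x) = (q - p * Real.exp x) ^ 2 := by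
      ring
    nlinarith [sq_nonneg (q - p * Real.exp x)]
  have hg'mono : Monotone g' :=
    monotone_of_deriv_nonneg (fun x => (hg'' x).differentiableAt)
      (fun x => by rw [(hg'' x).deriv]; exact hg''nonneg x)
  have hqp : q + p = 1 := by simp [hq]
  have hg'0 : g' 0 = 0 := by
    simp [hg'def, Real.exp_zero, hqp]
  have hgx : ∀ x, 0 ≤ g x := by
    intro x
    have hg0 : g 0 = 0 := by simp [hgdef, Real.exp_zero, hqp]
    rcases le_or_gt 0 x with hx | hx
    · have hmono : MonotoneOn g (Set.Ici (0:ℝ)) := by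
        apply monotoneOn_of_deriv_nonneg (convex_Ici 0)
          (fun y _ => (hg' y).differentiableAt.continuousAt.continuousWithinAt)
          (fun y _ => (hg' y).differentiableAt.differentiableWithinAt)
        intro y hy
        rw [(hg' y).deriv]
        rw [interior_Ici] at hy
        have : g' 0 ≤ g' y := hg'mono (le_of_lt hy)
        linarith [hg'0 ▸ this]
      have := hmono (Set.self_mem_Ici) (Set.mem_Ici.mpr hx) hx
      linarith [hg0 ▸ this]
    · have hanti : AntitoneOn g (Set.Iic (0:ℝ)) := by
        apply antitoneOn_of_deriv_nonpos (convex_Iic 0)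
          (fun y _ => (hg' y).differentiableAt.continuousAt.continuousWithinAt)
          (fun y _ => (hg' y).differentiableAt.differentiableWithinAt)
        intro y hy
        rw [(hg' y).deriv]
        rw [interior_Iic] at hy
        have : g' y ≤ g' 0 := hg'mono (le_of_lt hy)
        linarith [hg'0 ▸ this]
      have := hanti (Set.mem_Iic.mpr hx.le) (Set.self_mem_Iic) hx.le
      linarith [hg0 ▸ this]
  have := hgx h
  simp only [hgdef] at this
  linarith

lemma phi_le_phi {r p : ℝ} (hr : 0 < r) (hrp : r ≤ p) (x : ℝ) : phi r x ≤ phi p x := by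
  unfold phi
  by_cases hx : |x| ≤ 1
  · simp [hx]
  · simp only [hx, if_neg, if_false]
    push_neg at hx
    have hp : 0 < p := lt_of_lt_of_le hr hrp
    set y := |x| with hy
    have hy1 : 1 < y := hx
    have hy0 : 0 < y := lt_trans one_pos hy1
    set z := y ^ r with hz
    have hz1 : 1 ≤ z := by
      rw [hz, show (1:ℝ) = 1 ^ r by simp]
      exact rpow_le_rpow zero_le_one hy1.le hr.le
    have hyp : y ^ p = z ^ (p / r) := by
      rw [hz, ← rpow_mul hy0.le]
      congr 1
      field_simp
    have hs1 : 1 ≤ p / r := (one_le_div hr).mpr hrp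
    have hbern : 1 + (p / r) * (z - 1) ≤ z ^ (p / r) := by
      have := one_add_mul_self_le_rpow_one_add (s := z - 1) (by linarith) (p := p / r) hs1
      simpa using this
    have hkey : 1 + (p / r) * (z - 1) ≤ y ^ p := by rw [hyp]; exact hbern
    have hfin : (z - 1) / r ≤ (y ^ p - 1) / p := by
      have h2 : r + p * (z - 1) ≤ r * y ^ p := by
        calc r + p * (z - 1) = r * (1 + p / r * (z - 1)) := by field_simp
          _ ≤ r * y ^ p := mul_le_mul_of_nonneg_left hkey hr.le
      rw [div_le_div_iff₀ hr hp]
      linarith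
    have e1 : z / r - 1 / r = (z - 1) / r := by ring
    have e2 : y ^ p / p - 1 / p = (y ^ p - 1) / p := by ring
    linarith [e1 ▸ e2 ▸ hfin]

set_option maxHeartbeats 2000000 in
lemma key_ineq {p c d u : ℝ} (hp : 1 < p) (hc : 0 < c) (hcd : c ≤ d) (hu : 0 ≤ u) :
    min (c ^ 2 * u ^ 2 / 2) (d * u) ≤ phi p (gam (min p 2) c d * u) := by
  have hd : 0 < d := lt_of_lt_of_le hc hcd
  have hgam : gam (min p 2) c d
      = c ^ 2 / (2 * d) * ((min p 2) * (2 * (d / c) ^ 2 + 1 / (min p 2) - 1 / 2)) ^ (1 / (min p 2)) :=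
    rfl
  set r := min p 2 with hrdef
  have hr1 : 1 < r := lt_min hp one_lt_two
  have hr0 : 0 < r := lt_trans one_pos hr1
  have hr2 : r ≤ 2 := min_le_right _ _
  have hrp : r ≤ p := min_le_left _ _
  have ht : 1 ≤ d / c := (one_le_div hc).mpr hcd
  have ht0 : 0 < d / c := lt_of_lt_of_le one_pos ht
  set R := r * (2 * (d / c) ^ 2 + 1 / r - 1 / 2) with hRdef
  have hR_eq : R = 2 * r * (d / c) ^ 2 + 1 - r / 2 := by
    rw [hRdef]; field_simp; try ring
  have hR1 : 1 < R := by
    rw [hR_eq]; nlinarith only [ht, hr1, hr2, sq_nonneg (d / c - 1)]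
  have hR0 : 0 < R := lt_trans one_pos hR1
  set V := R ^ (1 / r) with hVdef
  have hV1 : 1 < V := by
    rw [hVdef]
    exact (one_lt_rpow_iff_of_pos hR0).mpr (Or.inl ⟨hR1, by positivity⟩)
  have hV0 : 0 < V := lt_trans one_pos hV1
  have hVr : V ^ r = R := by
    rw [hVdef, ← rpow_mul hR0.le, one_div_mul_cancel hr0.ne', rpow_one]
  set γ := c ^ 2 / (2 * d) * V with hγdef
  rw [hgam]
  have hγV : c ^ 2 * V = 2 * d * γ := by rw [hγdef]; field_simp; try ring
  clear_value γ V R r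
  have h2r : (2 : ℝ) ^ r ≤ 2 * r := by
    have hb := rpow_one_add_le_one_add_mul_self (s := (1 : ℝ)) (by norm_num)
      (p := r - 1) (by linarith) (by linarith)
    norm_num at hb
    have h3 : (2 : ℝ) ^ r = 2 * 2 ^ (r - 1) := by
      nth_rewrite 1 [show r = 1 + (r - 1) by ring]
      rw [rpow_add two_pos, rpow_one]
    rw [h3]; linarith
  have htr : (d / c) ^ r ≤ (d / c) ^ 2 := by
    calc (d / c) ^ r ≤ (d / c) ^ (2 : ℝ) := rpow_le_rpow_of_exponent_le ht hr2
      _ = (d / c) ^ 2 := rpow_two _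
  have htr0 : 0 < (d / c) ^ r := rpow_pos_of_pos ht0 r
  have hR2t : (2 * (d / c)) ^ r ≤ R := by
    rw [mul_rpow (by norm_num) ht0.le]
    have h5 : (2 : ℝ) ^ r * (d / c) ^ r ≤ 2 * r * (d / c) ^ 2 :=
      mul_le_mul h2r htr htr0.le (by positivity)
    linarith only [hR_eq, h5, hr2]
  have hV2t : 2 * (d / c) ≤ V := by
    have h5 : ((2 * (d / c)) ^ r) ^ (1 / r) ≤ R ^ (1 / r) :=
      rpow_le_rpow (by positivity) hR2t (by positivity)
    rw [← rpow_mul (by positivity : (0:ℝ) ≤ 2 * (d / c)), mul_one_div_cancel hr0.ne',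
      rpow_one] at h5
    rwa [← hVdef] at h5
  have hγc : c ≤ γ := by
    rw [hγdef]
    have h6 : c ^ 2 / (2 * d) * (2 * (d / c)) = c := by field_simp; try ring
    calc c = c ^ 2 / (2 * d) * (2 * (d / c)) := h6.symm
      _ ≤ c ^ 2 / (2 * d) * V := mul_le_mul_of_nonneg_left hV2t (by positivity)
  have hγ0 : 0 < γ := lt_of_lt_of_le hc hγc
  have h4d : 4 * r * d ^ 2 = c ^ 2 * (2 * R - 2 + r) := by
    have h7 : 2 * R - 2 + r = 4 * r * (d / c) ^ 2 := by rw [hR_eq]; ring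
    rw [h7]; field_simp; try ring
  refine le_trans ?_ (phi_le_phi hr0 hrp (γ * u))
  have hγu0 : 0 ≤ γ * u := by positivity
  by_cases hcase : γ * u ≤ 1
  · have habs : |γ * u| ≤ 1 := by rw [abs_of_nonneg hγu0]; exact hcase
    unfold phi
    rw [if_pos habs]
    refine le_trans (min_le_left _ _) ?_
    have h8 : c ^ 2 * u ^ 2 ≤ (γ * u) ^ 2 := by
      nlinarith only [mul_le_mul hγc hγc hc.le (le_trans hc.le hγc), sq_nonneg u]
    linarith only [h8]
  · push_neg at hcase
    have habs : ¬ |γ * u| ≤ 1 := by rw [abs_of_nonneg hγu0]; linarith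
    unfold phi
    rw [if_neg habs, abs_of_nonneg hγu0]
    set v := γ * u with hvdef
    clear_value v
    have hv1 : 1 < v := hcase
    have hv0 : 0 < v := lt_trans one_pos hv1
    have hγu : γ * (2 * d / c ^ 2) = V := by
      rw [hγdef]; field_simp; try ring
    by_cases hustar : u ≤ 2 * d / c ^ 2
    · refine le_trans (min_le_left _ _) ?_
      have hvV : v ≤ V := by
        calc v = γ * u := hvdef
          _ ≤ γ * (2 * d / c ^ 2) := mul_le_mul_of_nonneg_left hustar hγ0.le
          _ = V := hγu
      set s := v ^ r with hsdef
      clear_value s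
      have hs1 : 1 ≤ s := by
        rw [hsdef, show (1:ℝ) = 1 ^ r by simp]
        exact rpow_le_rpow zero_le_one hv1.le hr0.le
      have hsR : s ≤ R := by
        rw [hsdef, ← hVr]
        exact rpow_le_rpow hv0.le hvV hr0.le
      have hR1' : (0:ℝ) < R - 1 := by linarith only [hR1]
      have hconv : v ^ 2 * (R - 1) ≤ (R - s) * 1 + (s - 1) * V ^ 2 := by
        have hq2 : (1:ℝ) ≤ 2 / r := by rw [le_div_iff₀ hr0]; linarith only [hr2]
        have hθ0 : (0:ℝ) ≤ (R - s) / (R - 1) := div_nonneg (by linarith) hR1'.le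
        have hη0 : (0:ℝ) ≤ (s - 1) / (R - 1) := div_nonneg (by linarith) hR1'.le
        have hsum : (R - s) / (R - 1) + (s - 1) / (R - 1) = 1 := by field_simp; ring
        have hcx := (convexOn_rpow hq2).2 (Set.mem_Ici.mpr zero_le_one)
          (Set.mem_Ici.mpr hR0.le) hθ0 hη0 hsum
        simp only [smul_eq_mul, one_rpow, mul_one] at hcx
        have hbase : (R - s) / (R - 1) + (s - 1) / (R - 1) * R = s := by
          field_simp; try ring
        rw [hbase] at hcx
        have hs2r : s ^ (2 / r) = v ^ 2 := by
          rw [hsdef, ← rpow_mul hv0.le, show r * (2 / r) = 2 by field_simp, rpow_two]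
        have hR2r : R ^ (2 / r) = V ^ 2 := by
          rw [← hVr, ← rpow_mul hV0.le, show r * (2 / r) = 2 by field_simp, rpow_two]
        rw [hs2r, hR2r] at hcx
        calc v ^ 2 * (R - 1) ≤ ((R - s) / (R - 1) + (s - 1) / (R - 1) * V ^ 2) * (R - 1) :=
              mul_le_mul_of_nonneg_right hcx hR1'.le
          _ = (R - s) * 1 + (s - 1) * V ^ 2 := by field_simp; try ring
      have hc4V : c ^ 4 * V ^ 2 = 4 * d ^ 2 * γ ^ 2 := by
        linear_combination (c ^ 2 * V + 2 * d * γ) * hγV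
      have hγ2 : c ^ 2 ≤ γ ^ 2 := by nlinarith only [mul_le_mul hγc hγc hc.le (le_trans hc.le hγc)]
      have step1 : r * c ^ 4 * (v ^ 2 * (R - 1)) ≤ r * c ^ 4 * ((R - s) * 1 + (s - 1) * V ^ 2) :=
        mul_le_mul_of_nonneg_left hconv (by positivity)
      have step2 : r * c ^ 4 * ((R - s) * 1 + (s - 1) * V ^ 2)
          ≤ (2 * s - 2 + r) * γ ^ 2 * (R - 1) * c ^ 2 := by
        have hint : 0 ≤ r * (R - s) * (c ^ 2 * (γ ^ 2 - c ^ 2)) :=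
          mul_nonneg (mul_nonneg hr0.le (by linarith))
            (mul_nonneg (sq_nonneg c) (by linarith))
        have hsub : (2 * s - 2 + r) * γ ^ 2 * (R - 1) * c ^ 2
              - r * c ^ 4 * ((R - s) * 1 + (s - 1) * V ^ 2)
            = r * (R - s) * (c ^ 2 * (γ ^ 2 - c ^ 2)) := by
          linear_combination (-(s - 1) * γ ^ 2) * h4d + (-(r * (s - 1))) * hc4V
        linarith only [hsub, hint]
      have hpos : (0:ℝ) < (R - 1) * c ^ 2 := by positivity
      have main : r * c ^ 2 * v ^ 2 ≤ (2 * s - 2 + r) * γ ^ 2 := by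
        have h9 := le_trans step1 step2
        have h10 : (r * c ^ 2 * v ^ 2) * ((R - 1) * c ^ 2)
            ≤ ((2 * s - 2 + r) * γ ^ 2) * ((R - 1) * c ^ 2) := by linarith only [h9]
        exact le_of_mul_le_mul_right h10 hpos
      have main2 : r * (c ^ 2 * u ^ 2) ≤ 2 * s - 2 + r := by
        have hvu : v ^ 2 = γ ^ 2 * u ^ 2 := by rw [hvdef]; ring
        rw [hvu] at main
        have hγ2pos : (0:ℝ) < γ ^ 2 := by positivity
        have h10 : (r * (c ^ 2 * u ^ 2)) * γ ^ 2 ≤ (2 * s - 2 + r) * γ ^ 2 := by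
          linarith only [main]
        exact le_of_mul_le_mul_right h10 hγ2pos
      have hnum : s / r - 1 / r + 1 / 2 - c ^ 2 * u ^ 2 / 2
          = (2 * s - 2 + r - r * (c ^ 2 * u ^ 2)) / (2 * r) := by
        field_simp; try ring
      have hfin : 0 ≤ s / r - 1 / r + 1 / 2 - c ^ 2 * u ^ 2 / 2 := by
        rw [hnum]
        apply div_nonneg (by linarith only [main2]) (by positivity)
      linarith only [hfin]
    · push_neg at hustar
      refine le_trans (min_le_right _ _) ?_
      have hVv : V ≤ v := by
        calc V = γ * (2 * d / c ^ 2) := hγu.symm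
          _ ≤ γ * u := mul_le_mul_of_nonneg_left hustar.le hγ0.le
          _ = v := hvdef.symm
      have hvV1 : 1 ≤ v / V := (one_le_div hV0).mpr hVv
      have hbern : 1 + r * (v / V - 1) ≤ (v / V) ^ r := by
        have hb := one_add_mul_self_le_rpow_one_add (s := v / V - 1) (by linarith) (p := r) hr1.le
        simpa using hb
      have hdivr : (v / V) ^ r = v ^ r / R := by rw [div_rpow hv0.le hV0.le, hVr]
      rw [hdivr] at hbern
      have h8 : R * (1 + r * (v / V - 1)) ≤ v ^ r := by
        have h9 := mul_le_mul_of_nonneg_left hbern hR0.le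
        rwa [mul_comm R (v ^ r / R), div_mul_cancel₀ _ hR0.ne'] at h9
      have h9 : R * (V + r * (v - V)) ≤ v ^ r * V := by
        have h10 := mul_le_mul_of_nonneg_right h8 hV0.le
        calc R * (V + r * (v - V)) = R * (1 + r * (v / V - 1)) * V := by field_simp; try ring
          _ ≤ v ^ r * V := h10
      have e1 : 2 * r * (d * u) * (V * γ * c ^ 2) = (2 * R - 2 + r) * v * γ * c ^ 2 := by
        calc 2 * r * (d * u) * (V * γ * c ^ 2) = (c ^ 2 * V) * (2 * r * d * u * γ) := by ring
          _ = (2 * d * γ) * (2 * r * d * u * γ) := by rw [hγV]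
          _ = (4 * r * d ^ 2) * (u * γ ^ 2) := by ring
          _ = (c ^ 2 * (2 * R - 2 + r)) * (u * γ ^ 2) := by rw [h4d]
          _ = (2 * R - 2 + r) * (γ * u) * γ * c ^ 2 := by ring
          _ = (2 * R - 2 + r) * v * γ * c ^ 2 := by rw [← hvdef]
      have h2rR : (0:ℝ) ≤ 2 * r * R - 2 * R + 2 - r := by
        nlinarith only [mul_pos hR0 (sub_pos.mpr hr1), hr2]
      have hslack : 0 ≤ γ * c ^ 2 * (v - V) * (2 * r * R - 2 * R + 2 - r) :=
        mul_nonneg (mul_nonneg (mul_nonneg hγ0.le (sq_nonneg c)) (by linarith)) h2rR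
      have hK : (0:ℝ) < V * γ * c ^ 2 := by positivity
      have hN : 0 ≤ (2 * (v ^ r) - 2 + r - 2 * r * (d * u)) * (V * γ * c ^ 2) := by
        have h11 : 0 ≤ 2 * γ * c ^ 2 * (v ^ r * V - R * (V + r * (v - V))) :=
          mul_nonneg (by positivity) (sub_nonneg.mpr h9)
        have hid2 : (2 * (v ^ r) - 2 + r - 2 * r * (d * u)) * (V * γ * c ^ 2)
            = 2 * γ * c ^ 2 * (v ^ r * V - R * (V + r * (v - V)))
              + γ * c ^ 2 * (v - V) * (2 * r * R - 2 * R + 2 - r)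
              + ((2 * R - 2 + r) * v * γ * c ^ 2 - 2 * r * (d * u) * (V * γ * c ^ 2)) := by
          ring
        rw [hid2]
        linarith only [h11, hslack, e1]
      have hNN : 0 ≤ 2 * (v ^ r) - 2 + r - 2 * r * (d * u) := by
        have h12 : (0:ℝ) * (V * γ * c ^ 2) ≤ (2 * (v ^ r) - 2 + r - 2 * r * (d * u)) * (V * γ * c ^ 2) := by
          linarith only [hN]
        exact le_of_mul_le_mul_right h12 hK
      have hnum : v ^ r / r - 1 / r + 1 / 2 - d * u
          = (2 * (v ^ r) - 2 + r - 2 * r * (d * u)) / (2 * r) := by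
        field_simp; try ring
      have hfin : 0 ≤ v ^ r / r - 1 / r + 1 / 2 - d * u := by
        rw [hnum]
        apply div_nonneg (by linarith only [hNN]) (by positivity)
      linarith only [hfin]

set_option maxHeartbeats 1000000 in
theorem stmt_13 {Ω : Type*} [MeasurableSpace Ω] (μ : Measure Ω) [IsProbabilityMeasure μ]
    (ξ : Ω → ℝ) (hmeas : AEMeasurable ξ μ) (a b : ℝ) (hab : a < b)
    (hmean : ∫ ω, ξ ω ∂μ = 0)
    (hbd : ∀ᵐ ω ∂μ, ξ ω ∈ Set.Icc a b)
    (p : ℝ) (hp : 1 < p) :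
    ∀ l : ℝ, Real.log (∫ ω, Real.exp (l * ξ ω) ∂μ) ≤
      phi p (gam (min p 2) ((b - a) / 2) (max (-a) b) * l) := by
  intro l
  have hba : 0 < b - a := sub_pos.mpr hab
  have hξmeas : AEStronglyMeasurable ξ μ := hmeas.aestronglyMeasurable
  have hξbdd : Integrable ξ μ := by
    refine (integrable_const (max |a| |b|)).mono' hξmeas ?_
    filter_upwards [hbd] with ω hω
    rw [Real.norm_eq_abs]
    exact abs_le_max_abs_abs hω.1 hω.2
  have ha0 : a ≤ 0 := by
    have h1 : ∫ _ω, (a : ℝ) ∂μ ≤ ∫ ω, ξ ω ∂μ :=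
      integral_mono_ae (integrable_const a) hξbdd
        (by filter_upwards [hbd] with ω hω; exact hω.1)
    rw [hmean, integral_const] at h1
    simpa using h1
  have hb0 : 0 ≤ b := by
    have h1 : ∫ ω, ξ ω ∂μ ≤ ∫ _ω, (b : ℝ) ∂μ :=
      integral_mono_ae hξbdd (integrable_const b)
        (by filter_upwards [hbd] with ω hω; exact hω.2)
    rw [hmean, integral_const] at h1
    simpa using h1
  have hc : 0 < (b - a) / 2 := by linarith
  have hcd : (b - a) / 2 ≤ max (-a) b := by
    have h1 := le_max_left (-a) b
    have h2 := le_max_right (-a) b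
    linarith
  have hd0 : 0 < max (-a) b := lt_of_lt_of_le hc hcd
  have hξd : ∀ᵐ ω ∂μ, |ξ ω| ≤ max (-a) b := by
    filter_upwards [hbd] with ω hω
    rw [abs_le]
    constructor
    · linarith [le_max_left (-a) b, hω.1]
    · exact le_trans hω.2 (le_max_right _ _)
  have hexp_meas : AEStronglyMeasurable (fun ω => Real.exp (l * ξ ω)) μ :=
    (Real.measurable_exp.comp_aemeasurable (hmeas.const_mul l)).aestronglyMeasurable
  have hexp_int : Integrable (fun ω => Real.exp (l * ξ ω)) μ := by
    refine (integrable_const (Real.exp (|l| * max (-a) b))).mono' hexp_meas ?_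
    filter_upwards [hξd] with ω hω
    rw [Real.norm_eq_abs, abs_of_pos (Real.exp_pos _)]
    apply Real.exp_le_exp.mpr
    calc l * ξ ω ≤ |l * ξ ω| := le_abs_self _
      _ = |l| * |ξ ω| := abs_mul _ _
      _ ≤ |l| * max (-a) b := mul_le_mul_of_nonneg_left hω (abs_nonneg l)
  have hI_pos : 0 < ∫ ω, Real.exp (l * ξ ω) ∂μ := by
    have h1 : ProbabilityTheory.mgf ξ μ l = ∫ ω, Real.exp (l * ξ ω) ∂μ := rfl
    rw [← h1]
    exact ProbabilityTheory.mgf_pos hexp_int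
  rw [Real.log_le_iff_le_exp hI_pos]
  -- Hoeffding bound
  have bound1 : ∫ ω, Real.exp (l * ξ ω) ∂μ ≤ Real.exp (((b - a) / 2) ^ 2 * l ^ 2 / 2) := by
    have hpw0 : (0:ℝ) ≤ -a / (b - a) := div_nonneg (by linarith) hba.le
    have hpw1 : -a / (b - a) ≤ 1 := by rw [div_le_one hba]; linarith
    have hptw : ∀ᵐ ω ∂μ, Real.exp (l * ξ ω) ≤
        (Real.exp (l * b) - Real.exp (l * a)) / (b - a) * ξ ω
          + (b * Real.exp (l * a) - a * Real.exp (l * b)) / (b - a) := by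
      filter_upwards [hbd] with ω hω
      obtain ⟨h1, h2⟩ := hω
      have hθ0 : 0 ≤ (b - ξ ω) / (b - a) := div_nonneg (by linarith) hba.le
      have hη0 : 0 ≤ (ξ ω - a) / (b - a) := div_nonneg (by linarith) hba.le
      have hsum : (b - ξ ω) / (b - a) + (ξ ω - a) / (b - a) = 1 := by field_simp; ring
      have hcx := convexOn_exp.2 (Set.mem_univ (l * a)) (Set.mem_univ (l * b)) hθ0 hη0 hsum
      simp only [smul_eq_mul] at hcx
      have harg : (b - ξ ω) / (b - a) * (l * a) + (ξ ω - a) / (b - a) * (l * b) = l * ξ ω := by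
        field_simp; ring
      rw [harg] at hcx
      have hRHS : (b - ξ ω) / (b - a) * Real.exp (l * a) + (ξ ω - a) / (b - a) * Real.exp (l * b)
          = (Real.exp (l * b) - Real.exp (l * a)) / (b - a) * ξ ω
            + (b * Real.exp (l * a) - a * Real.exp (l * b)) / (b - a) := by
        field_simp; ring
      rw [hRHS] at hcx
      exact hcx
    have hint : Integrable (fun ω => (Real.exp (l * b) - Real.exp (l * a)) / (b - a) * ξ ω
        + (b * Real.exp (l * a) - a * Real.exp (l * b)) / (b - a)) μ :=
      (hξbdd.const_mul _).add (integrable_const _)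
    have h2 := integral_mono_ae hexp_int hint hptw
    have h3 : ∫ ω, ((Real.exp (l * b) - Real.exp (l * a)) / (b - a) * ξ ω
        + (b * Real.exp (l * a) - a * Real.exp (l * b)) / (b - a)) ∂μ
        = (b * Real.exp (l * a) - a * Real.exp (l * b)) / (b - a) := by
      rw [integral_add (hξbdd.const_mul _) (integrable_const _), integral_const_mul, hmean,
        integral_const]
      simp
    rw [h3] at h2
    refine le_trans h2 ?_
    have hh := hoeff_aux hpw0 hpw1 (l * (b - a))
    have hpos2 : 0 < (1 - -a / (b - a)) + -a / (b - a) * Real.exp (l * (b - a)) := by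
      rcases eq_or_lt_of_le hpw1 with h1 | h1
      · rw [h1]; simpa using Real.exp_pos (l * (b - a))
      · have h4 : 0 < 1 - -a / (b - a) := by linarith
        exact add_pos_of_pos_of_nonneg h4 (mul_nonneg hpw0 (Real.exp_pos _).le)
    have hBeq : (b * Real.exp (l * a) - a * Real.exp (l * b)) / (b - a)
        = Real.exp (l * a) * ((1 - -a / (b - a)) + -a / (b - a) * Real.exp (l * (b - a))) := by
      rw [show l * (b - a) = l * b - l * a by ring, Real.exp_sub]
      have hea : Real.exp (l * a) ≠ 0 := (Real.exp_pos _).ne'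
      field_simp
      ring
    have hBle : (b * Real.exp (l * a) - a * Real.exp (l * b)) / (b - a)
        ≤ Real.exp (l * a) * Real.exp (-a / (b - a) * (l * (b - a)) + (l * (b - a)) ^ 2 / 8) := by
      rw [hBeq]
      apply mul_le_mul_of_nonneg_left _ (Real.exp_pos _).le
      calc (1 - -a / (b - a)) + -a / (b - a) * Real.exp (l * (b - a))
          = Real.exp (Real.log ((1 - -a / (b - a)) + -a / (b - a) * Real.exp (l * (b - a)))) :=
            (Real.exp_log hpos2).symm
        _ ≤ Real.exp (-a / (b - a) * (l * (b - a)) + (l * (b - a)) ^ 2 / 8) :=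
            Real.exp_le_exp.mpr hh
    refine le_trans hBle ?_
    rw [← Real.exp_add]
    apply Real.exp_le_exp.mpr
    have e5 : -a / (b - a) * (l * (b - a)) = -(l * a) := by field_simp
    rw [e5]
    have e6 : l * a + (-(l * a) + (l * (b - a)) ^ 2 / 8) = ((b - a) / 2) ^ 2 * l ^ 2 / 2 := by
      ring
    rw [e6]
  -- crude bound
  have bound2 : ∫ ω, Real.exp (l * ξ ω) ∂μ ≤ Real.exp (max (-a) b * |l|) := by
    have hae : ∀ᵐ ω ∂μ, Real.exp (l * ξ ω) ≤ Real.exp (max (-a) b * |l|) := by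
      filter_upwards [hξd] with ω hω
      apply Real.exp_le_exp.mpr
      calc l * ξ ω ≤ |l * ξ ω| := le_abs_self _
        _ = |l| * |ξ ω| := abs_mul _ _
        _ ≤ |l| * max (-a) b := mul_le_mul_of_nonneg_left hω (abs_nonneg l)
        _ = max (-a) b * |l| := mul_comm _ _
    calc ∫ ω, Real.exp (l * ξ ω) ∂μ ≤ ∫ _ω, Real.exp (max (-a) b * |l|) ∂μ :=
          integral_mono_ae hexp_int (integrable_const _) hae
      _ = Real.exp (max (-a) b * |l|) := by rw [integral_const]; simp
  -- key inequality
  have hkey := key_ineq (p := p) (c := (b - a) / 2) (d := max (-a) b) (u := |l|) hp hc hcd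
    (abs_nonneg l)
  have hgam_nonneg : 0 ≤ gam (min p 2) ((b - a) / 2) (max (-a) b) := by
    have hr1 : 1 < min p 2 := lt_min hp one_lt_two
    have hr0 : 0 < min p 2 := lt_trans one_pos hr1
    have hr2 : min p 2 ≤ 2 := min_le_right _ _
    have hinner : 0 ≤ 2 * (max (-a) b / ((b - a) / 2)) ^ 2 + 1 / min p 2 - 1 / 2 := by
      have h1 : (1:ℝ) / 2 ≤ 1 / min p 2 := one_div_le_one_div_of_le hr0 hr2
      nlinarith only [h1, sq_nonneg (max (-a) b / ((b - a) / 2))]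
    unfold gam
    apply mul_nonneg (by positivity)
    exact rpow_nonneg (mul_nonneg hr0.le hinner) _
  have habs2 : gam (min p 2) ((b - a) / 2) (max (-a) b) * |l|
      = |gam (min p 2) ((b - a) / 2) (max (-a) b) * l| := by
    rw [abs_mul, abs_of_nonneg hgam_nonneg]
  rw [habs2, phi_abs] at hkey
  have hsq : |l| ^ 2 = l ^ 2 := sq_abs l
  rw [hsq] at hkey
  calc ∫ ω, Real.exp (l * ξ ω) ∂μ
      ≤ Real.exp (min (((b - a) / 2) ^ 2 * l ^ 2 / 2) (max (-a) b * |l|)) := by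
        rcases le_total (((b - a) / 2) ^ 2 * l ^ 2 / 2) (max (-a) b * |l|) with h | h
        · rw [min_eq_left h]; exact bound1
        · rw [min_eq_right h]; exact bound2
    _ ≤ Real.exp (phi p (gam (min p 2) ((b - a) / 2) (max (-a) b) * l)) :=
        Real.exp_le_exp.mpr hkey
end

section
/- Fix c > 0 and d ≥ c. The function p ↦ γ_p = (c²/(2d)) { p [ 2(d/c)² + 1/p − 1/2 ] }^{1/p} is strictly decreasing in p on (1,2], with γ_2 = c, and lim_{p↘1} γ_p = d + c²/(4d). -/
open MeasureTheory Real Filter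

/-!
With `A = 2 (d/c)² - 1/2 > 0` one has `γ_p = (c²/(2d)) (1 + pA)^{1/p}`. For `0 < p < q`,
Bernoulli's inequality with exponent `q/p > 1` gives `1 + qA < (1 + pA)^{q/p}`, that is
`(1 + qA)^{1/q} < (1 + pA)^{1/p}`. The value at `2` is a direct computation, and the limit at `1`
is the value at `1`, since `p ↦ γ_p` is continuous there.
-/

theorem strictAntiOn_one_add_mul_rpow_one_div {A : ℝ} (hA : 0 < A) :
    StrictAntiOn (fun p : ℝ => (1 + p * A) ^ (1 / p)) (Set.Ioi 0) := by
  intro p (hp : 0 < p) q (hq : 0 < q) hpq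
  have hbase : 0 < 1 + p * A := by positivity
  have bernoulli : 1 + q * A < (1 + p * A) ^ (q / p) := by
    have := one_add_mul_self_lt_rpow_one_add (s := p * A) (p := q / p) (by nlinarith)
      (by positivity) ((one_lt_div hp).2 hpq)
    rwa [← mul_assoc, div_mul_cancel₀ q hp.ne'] at this
  calc (1 + q * A) ^ (1 / q) < ((1 + p * A) ^ (q / p)) ^ (1 / q) :=
        rpow_lt_rpow (by positivity) bernoulli (by positivity)
    _ = (1 + p * A) ^ (1 / p) := by
        rw [← rpow_mul hbase.le]; congr 1; field_simp

theorem gam_eq_mul_one_add_mul_rpow {p : ℝ} (hp : p ≠ 0) (c d : ℝ) :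
    gam p c d = c ^ 2 / (2 * d) * (1 + p * (2 * (d / c) ^ 2 - 1 / 2)) ^ (1 / p) := by
  unfold gam; congr 2; field_simp; ring

theorem gam_two {c d : ℝ} (hc : 0 < c) (hd : 0 < d) : gam 2 c d = c := by
  have : 2 * (2 * (d / c) ^ 2 + 1 / 2 - 1 / 2) = (2 * d / c) ^ 2 := by ring
  rw [gam, this, ← sqrt_eq_rpow, sqrt_sq (by positivity)]
  field_simp

theorem gam_one {c d : ℝ} (hc : c ≠ 0) (hd : d ≠ 0) : gam 1 c d = d + c ^ 2 / (4 * d) := by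
  simp only [gam, div_one, rpow_one, one_mul]
  field_simp; ring

theorem continuousAt_gam_one (c d : ℝ) : ContinuousAt (fun p => gam p c d) 1 := by
  refine continuousAt_const.mul (ContinuousAt.rpow ?_ ?_ (.inl ?_))
  · fun_prop (disch := norm_num)
  · fun_prop (disch := norm_num)
  · have := sq_nonneg (d / c)
    exact ne_of_gt (by linarith)

theorem stmt_14 (c d : ℝ) (hc : 0 < c) (hd : c ≤ d) :
    StrictAntiOn (fun p : ℝ => gam p c d) (Set.Ioc 1 2) ∧
    gam 2 c d = c ∧
    Tendsto (fun p : ℝ => gam p c d) (nhdsWithin 1 (Set.Ioi 1)) (nhds (d + c ^ 2 / (4 * d))) := by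
  have hd0 : 0 < d := hc.trans_le hd
  have hA : 0 < 2 * (d / c) ^ 2 - 1 / 2 := by
    have : 1 ≤ d / c := (one_le_div hc).2 hd
    nlinarith
  refine ⟨fun p hp q hq hpq => ?_, gam_two hc hd0, ?_⟩
  · have hp0 : 0 < p := zero_lt_one.trans hp.1
    have hq0 : 0 < q := zero_lt_one.trans hq.1
    simp only [gam_eq_mul_one_add_mul_rpow hp0.ne', gam_eq_mul_one_add_mul_rpow hq0.ne']
    exact mul_lt_mul_of_pos_left (strictAntiOn_one_add_mul_rpow_one_div hA hp0 hq0 hpq)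
      (by positivity)
  · rw [← gam_one hc.ne' hd0.ne']
    exact (continuousAt_gam_one c d).continuousWithinAt.tendsto
end

section
/- Let φ_p be as below with composition property: for a, b ≥ 0, λ > 0, and r = min{p,2} with p > 1, φ_p(aλ) + φ_p(bλ) ≤ φ_p(λ (a^r + b^r)^{1/r}). -/
open MeasureTheory Real Filter

/-!
With `r = min p 2` one has `φ_p(u) = ψ(u ^ r)` for `u ≥ 0`, where `ψ(s) = s ^ (2/r) / 2` for
`s ≤ 1` and `ψ(s) = s ^ (p/r) / p - 1/p + 1/2` for `s > 1`. Both exponents are at least `1` and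
the slope `1/r` of the outer piece at `s = 1` dominates the value `1/2` there, which makes `ψ`
superadditive on `[0, ∞)`; for `s ≤ t` this is checked separately according to which of
`s`, `t`, `s + t` exceed `1`, using Bernoulli's inequality. Applied to `s = (aλ) ^ r`,
`t = (bλ) ^ r` it gives the claim, since `(s + t) ^ (1/r) = λ (a ^ r + b ^ r) ^ (1/r)`.
-/

namespace Real

lemma rpow_add_mul_rpow_sub_one_le_add_rpow {s t m : ℝ} (hs : 0 ≤ s) (ht : 0 < t)
    (hm : 1 ≤ m) : t ^ m + m * s * t ^ (m - 1) ≤ (s + t) ^ m := by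
  have bernoulli := one_add_mul_self_le_rpow_one_add (by linarith [div_nonneg hs ht.le] :
    -1 ≤ s / t) hm
  have hst : s + t = t * (1 + s / t) := by field_simp; ring
  calc t ^ m + m * s * t ^ (m - 1) = t ^ m * (1 + m * (s / t)) := by
        rw [rpow_sub ht, rpow_one]; field_simp
    _ ≤ t ^ m * (1 + s / t) ^ m := by gcongr
    _ = (s + t) ^ m := by rw [hst, mul_rpow ht.le (by positivity)]

lemma mul_rpow_le_add_rpow_sub_rpow {s t m : ℝ} (hs : 0 ≤ s) (hst : s ≤ t) (hm : 1 ≤ m) :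
    m * s ^ m ≤ (s + t) ^ m - t ^ m := by
  rcases hs.eq_or_lt with rfl | hs
  · simp [zero_rpow (by linarith : m ≠ 0)]
  have key := rpow_add_mul_rpow_sub_one_le_add_rpow hs.le (hs.trans_le hst) hm
  have hmono : s ^ (m - 1) ≤ t ^ (m - 1) := rpow_le_rpow hs.le hst (by linarith)
  have hsm : s ^ m = s * s ^ (m - 1) := by rw [rpow_sub hs, rpow_one]; field_simp
  rw [hsm]
  nlinarith [mul_le_mul_of_nonneg_left hmono (by positivity : 0 ≤ m * s)]

lemma mul_le_add_rpow_sub_rpow {s t m : ℝ} (hs : 0 ≤ s) (ht : 1 ≤ t) (hm : 1 ≤ m) :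
    m * s ≤ (s + t) ^ m - t ^ m := by
  have key := rpow_add_mul_rpow_sub_one_le_add_rpow (t := t) hs (by linarith) hm
  have hpow : 1 ≤ t ^ (m - 1) := one_le_rpow ht (by linarith)
  nlinarith [mul_le_mul_of_nonneg_left hpow (by positivity : 0 ≤ m * s)]

end Real

noncomputable def gluedPow (A B q m s : ℝ) : ℝ :=
  if s ≤ 1 then A * s ^ q else B * s ^ m + (A - B)

section gluedPow

variable {A B q m : ℝ}

lemma gluedPow_of_le_one {s : ℝ} (hs : s ≤ 1) : gluedPow A B q m s = A * s ^ q := if_pos hs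

lemma gluedPow_of_one_lt {s : ℝ} (hs : 1 < s) : gluedPow A B q m s = B * s ^ m + (A - B) :=
  if_neg hs.not_ge

lemma gluedPow_add_le_of_le (hA : 0 ≤ A) (hB : 0 ≤ B) (hq : 1 ≤ q) (hm : 1 ≤ m)
    (hAB : A ≤ B * m) {s t : ℝ} (hs : 0 ≤ s) (hst : s ≤ t) :
    gluedPow A B q m s + gluedPow A B q m t ≤ gluedPow A B q m (s + t) := by
  have ht : 0 ≤ t := hs.trans hst
  rcases le_or_gt (s + t) 1 with hst1 | hst1
  · rw [gluedPow_of_le_one (by linarith), gluedPow_of_le_one (by linarith),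
      gluedPow_of_le_one hst1, ← mul_add]
    exact mul_le_mul_of_nonneg_left (add_rpow_le_rpow_add hs ht hq) hA
  rw [gluedPow_of_one_lt hst1]
  rcases le_or_gt t 1 with ht1 | ht1
  · rw [gluedPow_of_le_one (hst.trans ht1), gluedPow_of_le_one ht1]
    have bernoulli := one_add_mul_self_le_rpow_one_add (by linarith : -1 ≤ s + t - 1) hm
    rw [add_sub_cancel] at bernoulli
    have hsq := rpow_le_self_of_le_one hs (hst.trans ht1) hq
    have htq := rpow_le_self_of_le_one ht ht1 hq
    nlinarith
  rw [gluedPow_of_one_lt ht1]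
  rcases le_or_gt s 1 with hs1 | hs1
  · rw [gluedPow_of_le_one hs1]
    have hsq := rpow_le_self_of_le_one hs hs1 hq
    have hgap := mul_le_add_rpow_sub_rpow hs ht1.le hm
    nlinarith
  · rw [gluedPow_of_one_lt hs1]
    have hsm : 1 ≤ s ^ m := one_le_rpow hs1.le (by linarith)
    have hgap := mul_rpow_le_add_rpow_sub_rpow hs hst hm
    nlinarith [mul_nonneg hB (mul_nonneg (sub_nonneg.2 hm) (sub_nonneg.2 hsm))]

lemma gluedPow_add_le (hA : 0 ≤ A) (hB : 0 ≤ B) (hq : 1 ≤ q) (hm : 1 ≤ m)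
    (hAB : A ≤ B * m) {s t : ℝ} (hs : 0 ≤ s) (ht : 0 ≤ t) :
    gluedPow A B q m s + gluedPow A B q m t ≤ gluedPow A B q m (s + t) := by
  rcases le_total s t with hst | hts
  · exact gluedPow_add_le_of_le hA hB hq hm hAB hs hst
  · rw [add_comm (gluedPow A B q m s), add_comm s]
    exact gluedPow_add_le_of_le hA hB hq hm hAB ht hts

end gluedPow

lemma phi_eq_gluedPow (p : ℝ) {r u : ℝ} (hr : 0 < r) (hu : 0 ≤ u) :
    phi p u = gluedPow (1 / 2) (1 / p) (2 / r) (p / r) (u ^ r) := by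
  have hpow : ∀ e : ℝ, (u ^ r) ^ (e / r) = u ^ e := fun e => by
    rw [← rpow_mul hu, mul_div_cancel₀ e hr.ne']
  have hle : u ^ r ≤ 1 ↔ u ≤ 1 := by
    conv_lhs => rw [← one_rpow r]
    exact rpow_le_rpow_iff hu zero_le_one hr
  rw [phi, abs_of_nonneg hu]
  rcases le_or_gt u 1 with hu1 | hu1
  · rw [if_pos hu1, gluedPow_of_le_one (hle.2 hu1), hpow, rpow_two]
    ring
  · rw [if_neg hu1.not_ge, gluedPow_of_one_lt (lt_of_not_ge (mt hle.1 hu1.not_ge)), hpow]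
    ring

theorem stmt_16 (p a b l : ℝ) (hp : 1 < p) (ha : 0 ≤ a) (hb : 0 ≤ b) (hl : 0 < l) :
    phi p (a * l) + phi p (b * l) ≤
      phi p (l * (a ^ min p 2 + b ^ min p 2) ^ (1 / min p 2)) := by
  set r := min p 2
  have hp0 : 0 < p := by linarith
  have hr : 0 < r := lt_min hp0 two_pos
  have hal : 0 ≤ a * l := mul_nonneg ha hl.le
  have hbl : 0 ≤ b * l := mul_nonneg hb hl.le
  have hscale : l * (a ^ r + b ^ r) ^ (1 / r) = ((a * l) ^ r + (b * l) ^ r) ^ (1 / r) := by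
    rw [mul_rpow ha hl.le, mul_rpow hb hl.le, ← add_mul, mul_rpow (by positivity) (by positivity),
      ← rpow_mul hl.le, mul_one_div_cancel hr.ne', rpow_one, mul_comm]
  have hinv : (((a * l) ^ r + (b * l) ^ r) ^ (1 / r)) ^ r = (a * l) ^ r + (b * l) ^ r := by
    rw [← rpow_mul (by positivity), one_div_mul_cancel hr.ne', rpow_one]
  rw [hscale, phi_eq_gluedPow p hr hal, phi_eq_gluedPow p hr hbl,
    phi_eq_gluedPow p hr (by positivity), hinv]
  refine gluedPow_add_le (by norm_num) (by positivity) ?_ ?_ ?_ (by positivity) (by positivity)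
  · rw [le_div_iff₀ hr, one_mul]; exact min_le_right p 2
  · rw [le_div_iff₀ hr, one_mul]; exact min_le_left p 2
  · rw [one_div_mul_eq_div, div_div_cancel_left' hp0.ne', one_div]
    exact inv_anti₀ hr (min_le_right p 2)
end

section
/- Let 1 < p < 2, q = p/(p−1) > 2, c > 0, d ≥ c, and γ_p > c as defined below. Then there exists a unique ε_p > 0 such that φ_q(ε_p/γ_p) = ε_p²/(2c²); moreover φ_q(ε/γ_p) < ε²/(2c²) for 0 < ε < ε_p and φ_q(ε/γ_p) > ε²/(2c²) for ε > ε_p. -/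
open MeasureTheory Real Filter

/-!
Put `γ = gam p c d` and `x = ε / γ`: the equation becomes `phi q x = K * x ^ 2` with
`K = γ ^ 2 / (2 * c ^ 2)`, and `K > 1 / 2` because `γ > c`. The ratio `phi q x / x ^ 2` is `1 / 2`
on `(0, 1]`, and on `[1, ∞)` it is `x ^ (q - 2) / q + (1 / 2 - 1 / q) * x ^ (-2)`, whose
derivative `(q - 2) / q * (x ^ (q - 3) - x ^ (-3))` is positive and which tends to `∞`; so it
crosses the level `K` exactly once, at some `x₀ > 1`, and `εp = γ * x₀`.

The bound `γ > c` comes from weighted AM-GM, `t ^ p ≤ (2 - p) * t + (p - 1) * t ^ 2` with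
`t = 2 * d / c`, which falls short of `p * (2 * (d / c) ^ 2 + 1 / p - 1 / 2)` by
`(2 - p) * (t - 1) ^ 2 / 2`.
-/

open Set

lemma rpow_le_of_one_le_of_le_two {t p : ℝ} (ht : 0 ≤ t) (hp1 : 1 ≤ p) (hp2 : p ≤ 2) :
    t ^ p ≤ (2 - p) * t + (p - 1) * t ^ 2 := by
  have hamgm := Real.geom_mean_le_arith_mean2_weighted (p₁ := t) (p₂ := t ^ 2)
    (by linarith : 0 ≤ 2 - p) (by linarith : 0 ≤ p - 1) ht (by positivity) (by ring)
  have hpow : t ^ (2 - p) * (t ^ 2) ^ (p - 1) = t ^ p := by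
    rw [← Real.rpow_natCast, ← Real.rpow_mul ht, ← Real.rpow_add' ht (by norm_num; linarith)]
    congr 1
    push_cast
    ring
  rwa [hpow] at hamgm

lemma lt_gam {p c d : ℝ} (hp1 : 1 ≤ p) (hp2 : p < 2) (hc : 0 < c) (hcd : c < 2 * d) :
    c < gam p c d := by
  have hd : 0 < d := by linarith
  set t := 2 * d / c with ht
  have ht1 : 1 < t := by rw [ht, one_lt_div hc]; exact hcd
  set A := p * (2 * (d / c) ^ 2 + 1 / p - 1 / 2)
  have hA : A = (2 - p) * t + (p - 1) * t ^ 2 + (2 - p) * (t - 1) ^ 2 / 2 := by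
    simp only [A, ht]; field_simp; ring
  have htA : t ^ p < A := by
    rw [hA]
    have : 0 < (2 - p) * (t - 1) ^ 2 / 2 := by
      have : 0 < t - 1 := by linarith
      positivity
    linarith [rpow_le_of_one_le_of_le_two (by linarith : 0 ≤ t) hp1 hp2.le]
  have hroot : t < A ^ (1 / p) := by
    have htp : 0 ≤ t ^ p := Real.rpow_nonneg (by linarith) p
    rwa [one_div, Real.lt_rpow_inv_iff_of_pos (by linarith) (by linarith) (by linarith)]
  calc c = c ^ 2 / (2 * d) * t := by rw [ht]; field_simp
    _ < c ^ 2 / (2 * d) * A ^ (1 / p) := by gcongr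
    _ = gam p c d := rfl

noncomputable def phiRatio (q x : ℝ) : ℝ := x ^ (q - 2) / q + (1 / 2 - 1 / q) * x ^ (-2 : ℝ)

lemma phiRatio_one (q : ℝ) : phiRatio q 1 = 1 / 2 := by
  simp [phiRatio]

lemma phi_of_abs_le_one {q x : ℝ} (hx : |x| ≤ 1) : phi q x = x ^ 2 / 2 := if_pos hx

lemma phi_eq_phiRatio_mul_sq {q x : ℝ} (hx : 1 ≤ x) : phi q x = phiRatio q x * x ^ 2 := by
  rcases hx.eq_or_lt with rfl | hx
  · simp [phi, phiRatio]
  have hx0 : 0 < x := by linarith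
  have hxq : x ^ (q - 2) * x ^ 2 = x ^ q := by
    rw [← Real.rpow_natCast, ← Real.rpow_add hx0]; norm_num
  have h2 : x ^ (-2 : ℝ) * x ^ 2 = 1 := by
    rw [← Real.rpow_natCast, ← Real.rpow_add hx0]; norm_num
  rw [phi, if_neg (by rw [abs_of_pos hx0]; linarith), abs_of_pos hx0, phiRatio, add_mul,
    mul_assoc, h2, div_mul_eq_mul_div, hxq]
  ring

lemma hasDerivAt_phiRatio {q x : ℝ} (hq : q ≠ 0) (hx : 0 < x) :
    HasDerivAt (phiRatio q) ((q - 2) / q * (x ^ (q - 3) - x ^ (-3 : ℝ))) x := by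
  have h1 := (Real.hasDerivAt_rpow_const (p := q - 2) (Or.inl hx.ne')).div_const q
  have h2 := (Real.hasDerivAt_rpow_const (p := -2) (Or.inl hx.ne')).const_mul (1 / 2 - 1 / q)
  refine (h1.add h2).congr_deriv ?_
  rw [show q - 2 - 1 = q - 3 by ring, show (-2 : ℝ) - 1 = -3 by norm_num]
  field_simp
  ring

lemma continuousOn_phiRatio {q : ℝ} (hq : q ≠ 0) : ContinuousOn (phiRatio q) (Ici 1) :=
  fun x hx ↦ (hasDerivAt_phiRatio hq (by linarith [mem_Ici.1 hx])).continuousAt.continuousWithinAt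

lemma strictMonoOn_phiRatio {q : ℝ} (hq : 2 < q) : StrictMonoOn (phiRatio q) (Ici 1) := by
  refine strictMonoOn_of_hasDerivWithinAt_pos (convex_Ici 1) (continuousOn_phiRatio (by linarith))
    (fun x hx ↦ (hasDerivAt_phiRatio (by linarith) ?_).hasDerivWithinAt) fun x hx ↦ ?_
  all_goals rw [interior_Ici, mem_Ioi] at hx
  · linarith
  · have : x ^ (-3 : ℝ) < x ^ (q - 3) := Real.rpow_lt_rpow_of_exponent_lt hx (by linarith)
    have : 0 < (q - 2) / q := div_pos (by linarith) (by linarith)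
    positivity

lemma tendsto_phiRatio_atTop {q : ℝ} (hq : 2 < q) : Tendsto (phiRatio q) atTop atTop := by
  have h1 := (tendsto_rpow_atTop (by linarith : 0 < q - 2)).atTop_div_const (by linarith : 0 < q)
  have h2 := (tendsto_rpow_neg_atTop (by norm_num : (0 : ℝ) < 2)).const_mul (1 / 2 - 1 / q)
  exact h1.atTop_add h2

lemma exists_phiRatio_eq {q K : ℝ} (hq : 2 < q) (hK : 1 / 2 < K) :
    ∃ x₀, 1 < x₀ ∧ phiRatio q x₀ = K := by
  rw [← phiRatio_one q] at hK
  exact intermediate_value_Ioi (continuousOn_phiRatio (by linarith)) (tendsto_phiRatio_atTop hq) hK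

lemma half_mul_sq_lt_phiRatio_mul_sq {q x₀ x : ℝ} (hq : 2 < q) (hx₀ : 1 < x₀) (hx : 0 < x) :
    x ^ 2 / 2 < phiRatio q x₀ * x ^ 2 := by
  have hK : 1 / 2 < phiRatio q x₀ :=
    phiRatio_one q ▸ strictMonoOn_phiRatio hq self_mem_Ici hx₀.le hx₀
  nlinarith [pow_pos hx 2]

lemma phi_lt_phiRatio_mul_sq_iff {q x₀ x : ℝ} (hq : 2 < q) (hx₀ : 1 < x₀) (hx : 0 < x) :
    phi q x < phiRatio q x₀ * x ^ 2 ↔ x < x₀ := by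
  rcases le_or_gt x 1 with hx1 | hx1
  · rw [phi_of_abs_le_one (by rwa [abs_of_pos hx])]
    exact iff_of_true (half_mul_sq_lt_phiRatio_mul_sq hq hx₀ hx) (by linarith)
  · rw [phi_eq_phiRatio_mul_sq hx1.le, mul_lt_mul_iff_left₀ (by positivity)]
    exact (strictMonoOn_phiRatio hq).lt_iff_lt hx1.le hx₀.le

lemma phiRatio_mul_sq_lt_phi_iff {q x₀ x : ℝ} (hq : 2 < q) (hx₀ : 1 < x₀) (hx : 0 < x) :
    phiRatio q x₀ * x ^ 2 < phi q x ↔ x₀ < x := by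
  rcases le_or_gt x 1 with hx1 | hx1
  · rw [phi_of_abs_le_one (by rwa [abs_of_pos hx])]
    have := half_mul_sq_lt_phiRatio_mul_sq hq hx₀ hx
    exact iff_of_false (by linarith) (by linarith)
  · rw [phi_eq_phiRatio_mul_sq hx1.le, mul_lt_mul_iff_left₀ (by positivity)]
    exact (strictMonoOn_phiRatio hq).lt_iff_lt hx₀.le hx1.le

lemma phi_eq_phiRatio_mul_sq_iff {q x₀ x : ℝ} (hq : 2 < q) (hx₀ : 1 < x₀) (hx : 0 < x) :
    phi q x = phiRatio q x₀ * x ^ 2 ↔ x = x₀ := by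
  rw [← not_iff_not]
  simp only [← ne_eq, ne_iff_lt_or_gt, phi_lt_phiRatio_mul_sq_iff hq hx₀ hx,
    phiRatio_mul_sq_lt_phi_iff hq hx₀ hx]

theorem stmt_19 (p q c d : ℝ) (hp1 : 1 < p) (hp2 : p < 2) (hq : q = p / (p - 1))
    (hc : 0 < c) (hd : c ≤ d) :
    ∃ εp : ℝ, 0 < εp ∧
      phi q (εp / gam p c d) = εp ^ 2 / (2 * c ^ 2) ∧
      (∀ ε : ℝ, 0 < ε → ε < εp → phi q (ε / gam p c d) < ε ^ 2 / (2 * c ^ 2)) ∧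
      (∀ ε : ℝ, εp < ε → ε ^ 2 / (2 * c ^ 2) < phi q (ε / gam p c d)) ∧
      ∀ ε : ℝ, 0 < ε → phi q (ε / gam p c d) = ε ^ 2 / (2 * c ^ 2) → ε = εp := by
  have hq2 : 2 < q := by rw [hq, lt_div_iff₀ (by linarith)]; linarith
  set γ := gam p c d
  have hγ : c < γ := lt_gam hp1.le hp2 hc (by linarith)
  have hγ0 : 0 < γ := hc.trans hγ
  have hK : 1 / 2 < γ ^ 2 / (2 * c ^ 2) := by
    rw [lt_div_iff₀ (by positivity)]
    nlinarith
  obtain ⟨x₀, hx₀, hx₀K⟩ := exists_phiRatio_eq hq2 hK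
  have hrhs (ε : ℝ) : ε ^ 2 / (2 * c ^ 2) = phiRatio q x₀ * (ε / γ) ^ 2 := by
    rw [hx₀K]; field_simp
  have hεp : 0 < γ * x₀ := by positivity
  refine ⟨γ * x₀, hεp, ?_, fun ε hε hlt ↦ ?_, fun ε hlt ↦ ?_, fun ε hε heq ↦ ?_⟩
  · rw [hrhs, phi_eq_phiRatio_mul_sq_iff hq2 hx₀ (by positivity),
      mul_div_cancel_left₀ _ hγ0.ne']
  · rwa [hrhs, phi_lt_phiRatio_mul_sq_iff hq2 hx₀ (by positivity), div_lt_iff₀' hγ0]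
  · rwa [hrhs, phiRatio_mul_sq_lt_phi_iff hq2 hx₀ (div_pos (hεp.trans hlt) hγ0),
      lt_div_iff₀' hγ0]
  · rwa [hrhs, phi_eq_phiRatio_mul_sq_iff hq2 hx₀ (by positivity), div_eq_iff hγ0.ne',
      mul_comm] at heq
end
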